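/- arXiv:2506.23064 — 4 statements merged into one kernel-verified Lean document; each statement's English description precedes it below -/
import Mathlib

section
/- Let N ∈ ℕ, m ∈ ℤ with m > N, a ∈ ℕ, q ∈ ℤ with max(0, N-a+m) ≤ q ≤ 2N, and set λ := N+1-a-q. Then for all integers j, d with 0 ≤ j ≤ N and 0 ≤ d ≤ N-j, Σ_{r=0}^{d} C_{j,r}^+ binom(N-j-r, d-r) (∏_{i=0}^{d-r-1}(q-N-m+i)) = D_{j,d}. -/
noncomputable section

open Polynomial Finset

/-- The space `Pol_b[t]_even`: span of the monomials `t^(b-2i)`, `0 ≤ i ≤ ⌊b/2⌋`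
(zero space when `b < 0`). -/
def polEven (b : ℤ) (f : ℂ[X]) : Prop :=
  ∀ n : ℕ, f.coeff n ≠ 0 → (n : ℤ) ≤ b ∧ (2 : ℤ) ∣ (b - n)

/-- Imaginary Gegenbauer operator `S_ℓ^μ`. -/
def gegenS (μ : ℂ) (ℓ : ℤ) (f : ℂ[X]) : ℂ[X] :=
  -((1 + X ^ 2) * derivative (derivative f)
      + (1 + 2 * C μ) * X * derivative f
      - C ((ℓ : ℂ) * ((ℓ : ℂ) + 2 * μ)) * f)

/-- Euler operator `ϑ_t`. -/
def euler (f : ℂ[X]) : ℂ[X] := X * derivative f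

/-- Renormalized Gegenbauer polynomial `C̃_n^μ(z)` for a natural number degree `n`. -/
def gegenC (μ : ℂ) (n : ℕ) : ℂ[X] :=
  ∑ k ∈ range (n / 2 + 1),
    C ((-1 : ℂ) ^ k / ((k.factorial : ℂ) * ((n - 2 * k).factorial : ℂ)) *
        ∏ s ∈ range (n / 2 - k), (μ + (((n + 1) / 2 : ℕ) : ℂ) + (s : ℂ))) *
      (C 2 * X) ^ (n - 2 * k)

/-- `C̃_ℓ^μ(z)` for `ℓ : ℤ` (zero for `ℓ < 0`). -/
def gegenCZ (μ : ℂ) (ℓ : ℤ) : ℂ[X] := if 0 ≤ ℓ then gegenC μ ℓ.toNat else 0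

/-- `C̃_ℓ^μ(it)`: substitution `z = it`. -/
def gegenCit (μ : ℂ) (ℓ : ℤ) : ℂ[X] := (gegenCZ μ ℓ).comp (C Complex.I * X)

/-- `γ(μ, ℓ)`. -/
def gam (μ : ℂ) (ℓ : ℤ) : ℂ := if ℓ % 2 = 0 then μ + ((ℓ / 2 : ℤ) : ℂ) else 1

/-- `Γ(x+k)/Γ(x)` interpreted as a finite product (reciprocal for `k < 0`). -/
def gratio (x : ℂ) (k : ℤ) : ℂ :=
  if 0 ≤ k then ∏ i ∈ range k.toNat, (x + (i : ℂ))
  else (∏ i ∈ range (-k).toNat, (x + (k : ℂ) + (i : ℂ)))⁻¹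

/-- `Γ(z₁)/Γ(z₂)` at integer arguments, as a finite product. -/
def gq (z₁ z₂ : ℤ) : ℂ := gratio (z₂ : ℂ) (z₁ - z₂)

/-- The set `Λ(N,a,m)`, regarded as a subset of `ℂ`. -/
def LambdaSet (N a : ℕ) (m : ℤ) : Set ℂ :=
  { x | ∃ q : ℤ, max 0 ((N : ℤ) - a + m) ≤ q ∧ q ≤ 2 * N ∧
      x = (N : ℂ) + 1 - (a : ℂ) - (q : ℂ) }

/-- The set `M_ℓ^k`, regarded as a subset of `ℂ`. -/
def Mset (ℓ k : ℤ) : Set ℂ :=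
  { x | ∃ d : ℤ, 0 ≤ d ∧ d ≤ ℓ / 2 - k - 1 ∧ x = -(((ℓ + 1) / 2 : ℤ) : ℂ) - (d : ℂ) }

/-- The solution space `Ξ(λ,a,N,m)` of the system (A_j^±), (B_j^±), realized as
the set of tuples `(f_{-N},…,f_N)`, encoded as functions `ℤ → ℂ[X]` vanishing for `|j| > N`. -/
def XiSet (lam : ℂ) (a N : ℕ) (m : ℤ) : Set (ℤ → ℂ[X]) :=
  { f |
    (∀ j : ℤ, (N : ℤ) < |j| → f j = 0) ∧
    (∀ j : ℤ, |j| ≤ (N : ℤ) → polEven ((a : ℤ) - m + j) (f j)) ∧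
    (∀ j : ℤ, 0 ≤ j → j ≤ (N : ℤ) →
      gegenS (lam + (j : ℂ) - 1) ((a : ℤ) + m - j) (f j)
        - C (2 * ((N : ℂ) - (j : ℂ))) * derivative (f (j + 1)) = 0) ∧
    (∀ j : ℤ, 0 ≤ j → j ≤ (N : ℤ) →
      gegenS (lam + (j : ℂ) - 1) ((a : ℤ) - m - j) (f (-j))
        + C (2 * ((N : ℂ) - (j : ℂ))) * derivative (f (-j - 1)) = 0) ∧
    (∀ j : ℤ, 1 ≤ j → j ≤ (N : ℤ) →
      C (2 * (-(m : ℂ)) * (lam + (a : ℂ) - 1)) * f j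
        + C (2 * (j : ℂ)) * (C (lam - 1) * f j + euler (f j))
        + C ((N : ℂ) - (j : ℂ)) * derivative (f (j + 1))
        + C ((N : ℂ) + (j : ℂ)) * derivative (f (j - 1)) = 0) ∧
    (∀ j : ℤ, 1 ≤ j → j ≤ (N : ℤ) →
      C (2 * (m : ℂ) * (lam + (a : ℂ) - 1)) * f (-j)
        + C (2 * (j : ℂ)) * (C (lam - 1) * f (-j) + euler (f (-j)))
        - C ((N : ℂ) + (j : ℂ)) * derivative (f (-j + 1))
        - C ((N : ℂ) - (j : ℂ)) * derivative (f (-j - 1)) = 0) }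

/-- The constant `C_{j,r}^+`. -/
def Cp (lam : ℂ) (a N : ℕ) (m : ℤ) (j r : ℕ) : ℂ :=
  ((N - j).choose r : ℂ) * (((2 * N - r).factorial : ℂ) / ((N + j).factorial : ℂ)) *
    (∏ i ∈ range r, ((N : ℂ) - (m : ℂ) - (i : ℂ))) *
    (∏ i ∈ range r, (lam + (a : ℂ) - (N : ℂ) - 1 + (i : ℂ)))

/-- The constant `C_{j,r}^-`. -/
def Cm (lam : ℂ) (a N : ℕ) (m : ℤ) (j r : ℕ) : ℂ :=
  ((N - j).choose r : ℂ) * (((2 * N - r).factorial : ℂ) / ((N + j).factorial : ℂ)) *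
    (∏ i ∈ range r, ((N : ℂ) + (m : ℂ) - (i : ℂ))) *
    (∏ i ∈ range r, (lam + (a : ℂ) - (N : ℂ) - 1 + (i : ℂ)))

/-- The gamma factor `Γ_j^+`. -/
def GammaP (lam : ℂ) (a N : ℕ) (m : ℤ) (j : ℕ) : ℂ :=
  ∏ d ∈ range (N - j), gam (lam + (N : ℂ) - 1) ((a : ℤ) + m - (N : ℤ) - ((d : ℤ) + 1))

/-- The gamma factor `Γ_j^-`. -/
def GammaM (lam : ℂ) (a N : ℕ) (m : ℤ) (j : ℕ) : ℂ :=
  ∏ d ∈ range (N - j), gam (lam + (N : ℂ) - 1) ((a : ℤ) - m - (N : ℤ) - ((d : ℤ) + 1))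

/-- The constant `D_{j,r}` (with parameter `q`). -/
def Dc (N : ℕ) (m q : ℤ) (j r : ℕ) : ℂ :=
  ((N - j).choose r : ℂ) * (((2 * N - r).factorial : ℂ) / ((N + j).factorial : ℂ)) *
    (∏ i ∈ range r, ((N : ℂ) + (m : ℂ) - (i : ℂ))) *
    (∏ i ∈ range r, ((q : ℂ) - 2 * (N : ℂ) + (i : ℂ)))

/-- Binomial coefficient with integer upper argument: `binom(x,k) = (∏_{i<k}(x-i))/k!`. -/
def zbinom (x : ℤ) (k : ℕ) : ℂ := (∏ i ∈ range k, ((x : ℂ) - (i : ℂ))) / (k.factorial : ℂ)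

/-- The gamma factor `Γ(d,r)` of the paper (for integral `λ = λz`, `ν = νz`). -/
def GammaAB (N : ℕ) (m lamz nuz : ℤ) (d r : ℕ) : ℂ :=
  (d.choose r : ℂ) *
    gq (lamz + (nuz - lamz - m + (N : ℤ) - (d : ℤ) - 1) / 2)
       (lamz + (nuz - lamz - m - 1) / 2) *
    (((2 * N - r).factorial : ℂ) / (N.factorial : ℂ)) *
    (∏ i ∈ range r, ((N : ℂ) + (m : ℂ) - (i : ℂ)))

/-- The constant `A(d,r)` of the paper (for integral `λ = λz`, `ν = νz`). -/
def Acoef (N : ℕ) (m lamz nuz : ℤ) (d r : ℕ) : ℂ :=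
  (-1 : ℂ) ^ (nuz - 1) * GammaAB N m lamz nuz d r *
    gq (lamz + (-nuz - lamz - m + (N : ℤ) - (d : ℤ) + 1) / 2)
       (lamz + (nuz - lamz - m + (N : ℤ) - (d : ℤ) - 1) / 2) *
    ∏ i ∈ range r, ((N : ℂ) + (nuz : ℂ) - ((i : ℂ) + 1))

/-- The constant `B(d,r)` of the paper (for integral `λ = λz`, `ν = νz`). -/
def Bcoef (N : ℕ) (m lamz nuz : ℤ) (d r : ℕ) : ℂ :=
  (-1 : ℂ) ^ ((d : ℤ) - (N : ℤ)) * GammaAB N m lamz nuz (2 * N - d) r *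
    ∏ i ∈ range r, ((N : ℂ) - (nuz : ℂ) + 2 - ((i : ℂ) + 1))

/-- The predicate `(E_j^+)` on `f_j`. -/
def Eplus (lam : ℂ) (a N : ℕ) (m : ℤ) (qp : ℂ) (j : ℕ) (fj : ℂ[X]) : Prop :=
  C ((-Complex.I) ^ (N - j) * (((2 * N).factorial : ℂ) / ((N + j).factorial : ℂ)) *
      GammaP lam a N m j) * fj
    = C qp * ∑ r ∈ range (N - j + 1),
        C (Cp lam a N m j r) *
          gegenCit (lam + (N : ℂ) - 1 - (r : ℂ)) ((a : ℤ) + m - 2 * (N : ℤ) + (j : ℤ) + 2 * (r : ℤ))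

/-- The predicate `(E_j^-)` on `f_{-j}`. -/
def Eminus (lam : ℂ) (a N : ℕ) (m : ℤ) (qm : ℂ) (j : ℕ) (fj : ℂ[X]) : Prop :=
  C (Complex.I ^ (N - j) * (((2 * N).factorial : ℂ) / ((N + j).factorial : ℂ)) *
      GammaM lam a N m j) * fj
    = C qm * ∑ r ∈ range (N - j + 1),
        C (Cm lam a N m j r) *
          gegenCit (lam + (N : ℂ) - 1 - (r : ℂ)) ((a : ℤ) - m - 2 * (N : ℤ) + (j : ℤ) + 2 * (r : ℤ))

/-- The constant `C_{0,r}(m')` with integer parameter `a`. -/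
def C0r (lam : ℂ) (N : ℕ) (a m' : ℤ) (r : ℕ) : ℂ :=
  (N.choose r : ℂ) * (((2 * N - r).factorial : ℂ) / (N.factorial : ℂ)) *
    (∏ i ∈ range r, ((N : ℂ) - (m' : ℂ) - (i : ℂ))) *
    (∏ i ∈ range r, (lam + (a : ℂ) - (N : ℂ) - 1 + (i : ℂ)))

/-- `α(λ,N,a,m')`. -/
def alphaF (lam : ℂ) (N : ℕ) (a m' : ℤ) : ℂ :=
  ∑ r ∈ range (N + 1), (-1 : ℂ) ^ r * C0r lam N a m' r *
    ∏ i ∈ range (N - r), ((((a + m') / 2 : ℤ) : ℂ) - ((i : ℂ) + 1))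

/-- `β(λ,N,a,m')`. -/
def betaF (lam : ℂ) (N : ℕ) (a m' : ℤ) : ℂ :=
  ∑ r ∈ range (N + 1), (-1 : ℂ) ^ r * C0r lam N a m' r *
    ∏ i ∈ range (N - r), ((((a + m' + 2) / 2 : ℤ) : ℂ) - ((i : ℂ) + 1))

/-- The polynomial function `P(λ)`. -/
def Pf (N : ℕ) (a m : ℤ) (lam : ℂ) : ℂ :=
  (lam + (((a + m - 1) / 2 : ℤ) : ℂ)) * (((a + m) / 2 : ℤ) : ℂ) *
      alphaF lam N a m * betaF lam N a (-m)
    - (lam + (((a - m - 1) / 2 : ℤ) : ℂ)) * (((a - m) / 2 : ℤ) : ℂ) *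
      alphaF lam N a (-m) * betaF lam N a m

/-- The polynomial function `Q(λ)`. -/
def Qf (N : ℕ) (a m : ℤ) (lam : ℂ) : ℂ :=
  (∏ i ∈ range (N + 1), ((m : ℂ) + (i : ℂ))) *
    (∏ i ∈ range N, (((i : ℂ) + 1) - (m : ℂ))) *
    ∏ q ∈ range (2 * N + 1), (lam - (N : ℂ) - 1 + (a : ℂ) + (q : ℂ))

/-- `α̃(a,m')`. -/
def alphaTilde (N q : ℕ) (a m' : ℤ) : ℂ :=
  ∑ r ∈ range (min q N + 1),
    (N.choose r : ℂ) * (((2 * N - r).factorial : ℂ) / ((2 * N - q).factorial : ℂ)) *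
      ((q.factorial : ℂ) / ((q - r).factorial : ℂ)) *
      (∏ i ∈ range r, ((N : ℂ) - (m' : ℂ) - (i : ℂ))) *
      (∏ i ∈ Finset.Ico r q, ((((a + m') / 2 : ℤ) : ℂ) - (N : ℂ) + (i : ℂ)))

/-- The explicit generating tuple of `Ξ(λ,a,N,m)` of Theorem 4.3 (statement 1). -/
def F1 (N a : ℕ) (m q : ℤ) : ℤ → ℂ[X] := fun j =>
  let lamz : ℤ := (N : ℤ) + 1 - a - q
  let nuz : ℤ := (N : ℤ) + 1 - q
  let lam : ℂ := (lamz : ℂ)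
  if 1 ≤ j ∧ j ≤ (N : ℤ) then
    C (Complex.I ^ (-j) * (-1 : ℂ) ^ (nuz - 1)) *
      ∑ r ∈ range (N - j.toNat + 1),
        C ((-1 : ℂ) ^ r * Acoef N m lamz nuz (N - j.toNat) r) *
          gegenCit (lam + (N : ℂ) - 1 - (r : ℂ))
            ((a : ℤ) - m + j + 2 * (1 - (N : ℤ) - nuz + (r : ℤ)))
  else if -(N : ℤ) ≤ j ∧ j ≤ 0 then
    C (Complex.I ^ j) *
      ∑ r ∈ range (N - (-j).toNat + 1),
        C ((-1 : ℂ) ^ r * Bcoef N m lamz nuz (N + (-j).toNat) r) *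
          gegenCit (lam + (N : ℂ) - 1 - (r : ℂ))
            ((a : ℤ) - m + (-j) - 2 * (N : ℤ) + 2 * (r : ℤ))
  else 0

/-- The explicit tuple of statement 16. -/
def F16 (N a : ℕ) (m q : ℤ) : ℤ → ℂ[X] := fun j =>
  let lam : ℂ := (N : ℂ) + 1 - (a : ℂ) - (q : ℂ)
  if 1 ≤ j ∧ j ≤ (N : ℤ) then
    C ((-Complex.I) ^ j.toNat * (((N + j.toNat).factorial : ℂ) / (N.factorial : ℂ)) *
        gratio (lam + ((((a : ℤ) - m - 1) / 2 : ℤ) : ℂ))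
          (((a : ℤ) - m + j - 1) / 2 + q - (N : ℤ) - ((a : ℤ) - m - 1) / 2)) *
      ∑ r ∈ range (N - j.toNat + 1),
        C (Dc N m q j.toNat r) *
          gegenCit (lam + (N : ℂ) - 1 - (r : ℂ))
            ((a : ℤ) - m + j + 2 * (q - 2 * (N : ℤ) + (r : ℤ)))
  else if -(N : ℤ) ≤ j ∧ j ≤ 0 then
    C (Complex.I ^ (-j).toNat * (((N + (-j).toNat).factorial : ℂ) / (N.factorial : ℂ)) *
        gratio (lam + ((((a : ℤ) - m - 1) / 2 : ℤ) : ℂ))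
          (((a : ℤ) - m + (-j) - 1) / 2 - ((a : ℤ) - m - 1) / 2)) *
      ∑ r ∈ range (N - (-j).toNat + 1),
        C (Cm lam a N m (-j).toNat r) *
          gegenCit (lam + (N : ℂ) - 1 - (r : ℂ))
            ((a : ℤ) - m - 2 * (N : ℤ) + (-j) + 2 * (r : ℤ))
  else 0
/-!
The identity is a terminating Pfaff–Saalschütz summation in disguise. Writing
`C(N-j,r) C(N-j-r,d-r) = C(N-j,d) C(d,r)` and `(2N-r)! = (2N-d)! (2N-r)(2N-r-1)⋯(2N-d+1)`, the sum
becomes `C(N-j,d) (2N-d)!/(N+j)!` times a Saalschütz sum in `x = N-m`, `y = q`, `z = 2N`, whose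
value `∏_{i<d} (z-x-i) ∏_{i<d} (y-z+i)` is exactly the remaining part of `D_{j,d}`. The Saalschütz
sum is evaluated by Zeilberger's method: the summands at `d+1` and at `d` differ, up to the
factor `(z-x-d)(y-z+d)`, by a difference that telescopes in `r`.
-/

section Saalschutz

variable {R : Type*} [CommRing R]

def saalschutzTerm (x y z : R) (d r : ℕ) : R :=
  (d.choose r : R) * (∏ i ∈ range r, (x - i)) * (∏ i ∈ range r, ((i : R) - y)) *
    (∏ i ∈ range (d - r), (z - r - i)) * ∏ i ∈ range (d - r), (y - z + x + i)

/-- The Wilf–Zeilberger certificate of `saalschutzTerm`. -/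
def saalschutzCert (x y z : R) (d : ℕ) : ℕ → R
  | 0 => 0
  | s + 1 => -(x - s) * (s - y) * saalschutzTerm x y z d s

variable (x y z : R)

@[simp]
lemma saalschutzTerm_succ_right_self (d : ℕ) : saalschutzTerm x y z d (d + 1) = 0 := by
  simp [saalschutzTerm, Nat.choose_succ_self]

lemma saalschutzTerm_succ_zero (d : ℕ) :
    saalschutzTerm x y z (d + 1) 0
      = (z - x - d) * (y - z + d) * saalschutzTerm x y z d 0
        + (saalschutzCert x y z d 1 - saalschutzCert x y z d 0) := by
  simp only [saalschutzTerm, saalschutzCert, Nat.choose_zero_right, Nat.sub_zero]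
  rw [prod_range_succ, prod_range_succ]
  push_cast
  ring

lemma saalschutzTerm_succ_succ_self (d : ℕ) :
    saalschutzTerm x y z (d + 1) (d + 1)
      = (z - x - d) * (y - z + d) * saalschutzTerm x y z d (d + 1)
        + (saalschutzCert x y z d (d + 2) - saalschutzCert x y z d (d + 1)) := by
  simp only [saalschutzCert, saalschutzTerm_succ_right_self, mul_zero, zero_add, zero_sub]
  simp only [saalschutzTerm, Nat.choose_self, Nat.sub_self, prod_range_zero, Nat.cast_one]
  rw [prod_range_succ, prod_range_succ]
  ring

lemma saalschutzTerm_add_two_succ (s k : ℕ) :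
    saalschutzTerm x y z (s + k + 2) (s + 1)
      = (z - x - (s + k + 1 : ℕ)) * (y - z + (s + k + 1 : ℕ)) *
          saalschutzTerm x y z (s + k + 1) (s + 1)
        + (saalschutzCert x y z (s + k + 1) (s + 2)
          - saalschutzCert x y z (s + k + 1) (s + 1)) := by
  have pascal : ((s + k + 2).choose (s + 1) : R)
      = ((s + k + 1).choose s : R) + ((s + k + 1).choose (s + 1) : R) := by
    rw [Nat.choose_succ_succ', Nat.cast_add]
  have choose_succ_right : ((s + k + 1).choose (s + 1) : R) * ((s : R) + 1)
      = ((s + k + 1).choose s : R) * ((k : R) + 1) := by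
    have := Nat.choose_succ_right_eq (s + k + 1) s
    rw [show s + k + 1 - s = k + 1 by omega] at this
    exact_mod_cast congrArg (Nat.cast : ℕ → R) this
  have shift : ∏ i ∈ range (k + 1), (z - s - i)
      = (z - s) * ∏ i ∈ range k, (z - (s + 1 : ℕ) - i) := by
    rw [prod_range_succ', mul_comm]
    congr 1
    · push_cast; ring
    · exact prod_congr rfl fun i _ => by push_cast; ring
  simp only [saalschutzTerm, saalschutzCert, show s + k + 2 - (s + 1) = k + 1 by omega,
    show s + k + 1 - (s + 1) = k by omega, show s + k + 1 - s = k + 1 by omega]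
  rw [shift, prod_range_succ (f := fun i : ℕ => x - i),
    prod_range_succ (f := fun i : ℕ => (i : R) - y),
    prod_range_succ (f := fun i : ℕ => z - (s + 1 : ℕ) - i),
    prod_range_succ (f := fun i : ℕ => y - z + x + i)]
  push_cast
  set A := ∏ i ∈ range s, (x - i)
  set B := ∏ i ∈ range s, ((i : R) - y)
  set P := ∏ i ∈ range k, (z - (s + 1) - (i : R))
  set Q := ∏ i ∈ range k, (y - z + x + (i : R))
  linear_combination
    (A * (x - s) * B * (s - y) * P * (z - (s + 1) - k) * Q * (y - z + x + k)) * pascal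
      + (A * (x - s) * B * (s - y) * P * Q * (y - z + x + k)) * choose_succ_right

lemma saalschutzTerm_succ_left (d r : ℕ) (hr : r ≤ d + 1) :
    saalschutzTerm x y z (d + 1) r
      = (z - x - d) * (y - z + d) * saalschutzTerm x y z d r
        + (saalschutzCert x y z d (r + 1) - saalschutzCert x y z d r) := by
  match r with
  | 0 => exact saalschutzTerm_succ_zero x y z d
  | s + 1 =>
    obtain h | rfl := Nat.lt_or_eq_of_le (Nat.le_of_succ_le_succ hr)
    · obtain ⟨k, rfl⟩ : ∃ k, d = s + k + 1 := ⟨d - s - 1, by omega⟩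
      exact_mod_cast saalschutzTerm_add_two_succ x y z s k
    · exact saalschutzTerm_succ_succ_self x y z s

theorem sum_saalschutzTerm (d : ℕ) :
    ∑ r ∈ range (d + 1), saalschutzTerm x y z d r
      = (∏ i ∈ range d, (z - x - i)) * ∏ i ∈ range d, (y - z + i) := by
  induction d with
  | zero => simp [saalschutzTerm]
  | succ d ih =>
    have hcert : saalschutzCert x y z d (d + 2) = 0 := by
      simp [saalschutzCert]
    calc ∑ r ∈ range (d + 2), saalschutzTerm x y z (d + 1) r
        = ∑ r ∈ range (d + 2), ((z - x - d) * (y - z + d) * saalschutzTerm x y z d r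
              + (saalschutzCert x y z d (r + 1) - saalschutzCert x y z d r)) :=
          sum_congr rfl fun r hr => saalschutzTerm_succ_left x y z d r (mem_range_succ_iff.mp hr)
      _ = (z - x - d) * (y - z + d) * ∑ r ∈ range (d + 1), saalschutzTerm x y z d r := by
          rw [sum_add_distrib, ← mul_sum, sum_range_sub, sum_range_succ,
            saalschutzTerm_succ_right_self, hcert]
          simp [saalschutzCert]
      _ = _ := by
          rw [ih, prod_range_succ, prod_range_succ]
          ring

end Saalschutz

lemma Nat.choose_mul_choose_sub_mul_factorial {n M d r : ℕ} (hr : r ≤ d) (hd : d ≤ M) :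
    n.choose r * (n - r).choose (d - r) * (M - r).factorial
      = n.choose d * d.choose r * ((M - d).factorial * (M - r).descFactorial (d - r)) := by
  rw [Nat.choose_mul hr, ← Nat.sub_sub_sub_cancel_right hr,
    Nat.factorial_mul_descFactorial (Nat.sub_le_sub_right hd r)]

lemma Cp_mul_choose_mul_prod_eq (N a j d r : ℕ) (m q : ℤ) (hr : r ≤ d) (hd : d ≤ N - j) :
    Cp ((N : ℂ) + 1 - a - q) a N m j r * ((N - j - r).choose (d - r) : ℂ) *
        ∏ i ∈ range (d - r), ((q : ℂ) - N - m + i)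
      = (N - j).choose d * (((2 * N - d).factorial : ℂ) / (N + j).factorial) *
          saalschutzTerm ((N : ℂ) - m) q (2 * N) d r := by
  have hcomb : ((N - j).choose r : ℂ) * (N - j - r).choose (d - r) * (2 * N - r).factorial
      = (N - j).choose d * d.choose r *
          ((2 * N - d).factorial * (2 * N - r).descFactorial (d - r)) := by
    exact_mod_cast Nat.choose_mul_choose_sub_mul_factorial (n := N - j) hr (by omega)
  have hdesc : ((2 * N - r).descFactorial (d - r) : ℂ)
      = ∏ i ∈ range (d - r), (2 * (N : ℂ) - r - i) := by
    rw [← descPochhammer_eval_eq_descFactorial, descPochhammer_eval_eq_prod_range]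
    push_cast [Nat.cast_sub (show r ≤ 2 * N by omega)]
    ring_nf
  have hpoch : ∏ i ∈ range r, ((N : ℂ) + 1 - a - q + a - N - 1 + i)
      = ∏ i ∈ range r, ((i : ℂ) - q) :=
    prod_congr rfl fun i _ => by ring
  have hshift : ∏ i ∈ range (d - r), ((q : ℂ) - N - m + i)
      = ∏ i ∈ range (d - r), ((q : ℂ) - 2 * N + (N - m) + i) :=
    prod_congr rfl fun i _ => by ring
  simp only [Cp, saalschutzTerm]
  rw [hpoch, hshift, ← hdesc]
  linear_combination ((∏ i ∈ range r, ((N : ℂ) - m - i)) * (∏ i ∈ range r, ((i : ℂ) - q)) *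
    (∏ i ∈ range (d - r), ((q : ℂ) - 2 * N + (N - m) + i)) * ((N + j).factorial : ℂ)⁻¹) * hcomb

theorem stmt14_general (N a : ℕ) (m : ℤ) (q : ℤ) :
    ∀ j d : ℕ, j ≤ N → d ≤ N - j →
      ∑ r ∈ Finset.range (d + 1),
        Cp ((N : ℂ) + 1 - (a : ℂ) - (q : ℂ)) a N m j r *
          ((N - j - r).choose (d - r) : ℂ) *
          (∏ i ∈ Finset.range (d - r), ((q : ℂ) - (N : ℂ) - (m : ℂ) + (i : ℂ)))
      = Dc N m q j d := by
  intro j d _ hd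
  rw [sum_congr rfl fun r hr => Cp_mul_choose_mul_prod_eq N a j d r m q
      (mem_range_succ_iff.mp hr) hd, ← mul_sum, sum_saalschutzTerm]
  have hprod : ∏ i ∈ range d, (2 * (N : ℂ) - (N - m) - i)
      = ∏ i ∈ range d, ((N : ℂ) + m - i) :=
    prod_congr rfl fun i _ => by ring
  rw [hprod, Dc]
  ring

/-- the identity `Σ_r C_{j,r}^+ binom(N-j-r, d-r) ∏ (q-N-m+i) = D_{j,d}`. -/
theorem stmt14 (N a : ℕ) (m : ℤ) (hm : (N : ℤ) < m) (q : ℤ)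
    (hq1 : max 0 ((N : ℤ) - a + m) ≤ q) (hq2 : q ≤ 2 * N) :
    ∀ j d : ℕ, j ≤ N → d ≤ N - j →
      ∑ r ∈ Finset.range (d + 1),
        Cp ((N : ℂ) + 1 - (a : ℂ) - (q : ℂ)) a N m j r *
          ((N - j - r).choose (d - r) : ℂ) *
          (∏ i ∈ Finset.range (d - r), ((q : ℂ) - (N : ℂ) - (m : ℂ) + (i : ℂ)))
      = Dc N m q j d :=
  stmt14_general N a m q
end
end

section
/- Let N ∈ ℕ, m ∈ ℤ with m > N, a ∈ ℕ with m−N ≤ a < m, and λ ∈ ℂ. If Ξ(λ,a,N,m) ≠ {0}, then λ ∈ Λ(N,a,m). -/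
noncomputable section

open Polynomial Finset

lemma gegenS_coeff (μ : ℂ) (ℓ : ℤ) (g : ℂ[X]) :
    (gegenS μ ℓ g).coeff g.natDegree =
      (((ℓ:ℂ) - g.natDegree) * ((ℓ:ℂ) + g.natDegree + 2*μ)) * g.coeff g.natDegree := by
  have h3 : ∀ k, g.natDegree < k → g.coeff k = 0 := fun k hk =>
    coeff_eq_zero_of_natDegree_lt hk
  have e1 : (1 + X ^ 2 : ℂ[X]) * derivative (derivative g)
      = derivative (derivative g) + X ^ 2 * derivative (derivative g) := by ring
  have e2 : (1 + 2 * C μ : ℂ[X]) * X * derivative g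
      = C (1 + 2 * μ) * (X * derivative g) := by
    rw [map_add, map_mul, map_one, map_ofNat]; ring
  rw [gegenS, e1, e2]
  rcases hn : g.natDegree with _ | n
  · rw [hn] at h3
    have hx2 : ((X:ℂ[X]) ^ 2 * derivative (derivative g)).coeff 0 = 0 := by
      rw [coeff_X_pow_mul']; simp
    have hx1 : ((X:ℂ[X]) * derivative g).coeff 0 = 0 := by
      rw [mul_coeff_zero]; simp
    have hz : (derivative (derivative g)).coeff 0 = 0 := by
      rw [coeff_derivative, coeff_derivative, h3 (0+1+1) (by omega)]; simp
    simp only [coeff_neg, coeff_add, coeff_sub, coeff_C_mul, hx2, hx1, hz]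
    push_cast; ring
  · rcases n with _ | n
    · rw [hn] at h3
      have hx2 : ((X:ℂ[X]) ^ 2 * derivative (derivative g)).coeff 1 = 0 := by
        rw [coeff_X_pow_mul']; simp
      have hx1 : ((X:ℂ[X]) * derivative g).coeff 1 = (derivative g).coeff 0 :=
        coeff_X_mul _ 0
      have hz : (derivative (derivative g)).coeff 1 = 0 := by
        rw [coeff_derivative, coeff_derivative, h3 (1+1+1) (by omega)]; simp
      simp only [coeff_neg, coeff_add, coeff_sub, coeff_C_mul, hx2, hx1, hz,
        coeff_derivative]
      push_cast; ring
    · rw [hn] at h3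
      have hx2 : ((X:ℂ[X]) ^ 2 * derivative (derivative g)).coeff (n+2)
          = (derivative (derivative g)).coeff n := coeff_X_pow_mul _ 2 n
      have hx1 : ((X:ℂ[X]) * derivative g).coeff (n+2) = (derivative g).coeff (n+1) :=
        coeff_X_mul _ (n+1)
      have hz : (derivative (derivative g)).coeff (n+2) = 0 := by
        rw [coeff_derivative, coeff_derivative, h3 (n+2+1+1) (by omega)]; simp
      simp only [coeff_neg, coeff_add, coeff_sub, coeff_C_mul, hx2, hx1, hz,
        coeff_derivative]
      push_cast; ring

/-- for `m - N ≤ a < m`, nontriviality of `Ξ(λ,a,N,m)` forces `λ ∈ Λ(N,a,m)`. -/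
theorem stmt15 (N a : ℕ) (m : ℤ) (hm : (N : ℤ) < m)
    (ha1 : m - (N : ℤ) ≤ (a : ℤ)) (ha2 : (a : ℤ) < m)
    (lam : ℂ) (h : XiSet lam a N m ≠ {0}) :
    lam ∈ LambdaSet N a m := by
  classical
  have h0 : (0 : ℤ → ℂ[X]) ∈ XiSet lam a N m := by
    refine ⟨fun j _ => rfl, fun j _ => ?_, fun j _ _ => ?_, fun j _ _ => ?_,
      fun j _ _ => ?_, fun j _ _ => ?_⟩
    · intro n hn; simp at hn
    · simp [gegenS]
    · simp [gegenS]
    · simp [euler]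
    · simp [euler]
  obtain ⟨f, hf, hf0⟩ :=
    Set.exists_of_ssubset ((Set.singleton_subset_iff.mpr h0).ssubset_of_ne (Ne.symm h))
  rw [Set.mem_singleton_iff] at hf0
  obtain ⟨hsupp, hpol, hA, -, -, -⟩ := hf
  have hsmall : ∀ j : ℤ, f j ≠ 0 → 1 ≤ j ∧ j ≤ (N:ℤ) := by
    intro j hj
    have hjN : |j| ≤ (N:ℤ) := by
      by_contra hc
      exact hj (hsupp j (lt_of_not_ge hc))
    rw [abs_le] at hjN
    have hge : 0 ≤ (a:ℤ) - m + j := by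
      by_contra hc
      apply hj
      refine Polynomial.ext fun n => ?_
      rw [coeff_zero]
      by_contra hcn
      obtain ⟨h1, -⟩ := hpol j (abs_le.mpr hjN) n hcn
      omega
    omega
  obtain ⟨j₁, hj₁⟩ : ∃ j, f j ≠ 0 := by
    by_contra hc
    push_neg at hc
    exact hf0 (funext hc)
  set S : Finset ℤ := (Finset.Icc (1:ℤ) (N:ℤ)).filter (fun j => f j ≠ 0) with hS
  have hmemS : ∀ j, f j ≠ 0 → j ∈ S := by
    intro j hj
    simp only [hS, Finset.mem_filter, Finset.mem_Icc]
    exact ⟨hsmall j hj, hj⟩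
  have hSne : S.Nonempty := ⟨j₁, hmemS j₁ hj₁⟩
  obtain ⟨j₀, hj₀S, hmax⟩ : ∃ j₀ ∈ S, ∀ j ∈ S, j ≤ j₀ :=
    ⟨S.max' hSne, S.max'_mem hSne, fun j hj => S.le_max' j hj⟩
  rw [hS, Finset.mem_filter, Finset.mem_Icc] at hj₀S
  obtain ⟨⟨hj₀1, hj₀N⟩, hg0⟩ := hj₀S
  have hnext : f (j₀ + 1) = 0 := by
    by_contra hc
    have := hmax _ (hmemS _ hc)
    omega
  have hAeq := hA j₀ (by omega) hj₀N
  rw [hnext] at hAeq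
  simp only [derivative_zero, mul_zero, sub_zero] at hAeq
  set g := f j₀ with hg
  set n := g.natDegree with hnd
  have hgc : g.coeff n ≠ 0 := fun hc => hg0 (leadingCoeff_eq_zero.mp hc)
  have hcoeff := gegenS_coeff (lam + (j₀:ℂ) - 1) ((a:ℤ) + m - j₀) g
  rw [hAeq, coeff_zero] at hcoeff
  obtain ⟨hn1, hn2⟩ := hpol j₀ (by rw [abs_le]; omega) n hgc
  have hln : (((a:ℤ) + m - j₀ : ℤ) : ℂ) - (n:ℂ) ≠ 0 := by
    intro hc
    have h' : (((a:ℤ) + m - j₀ : ℤ) : ℂ) = ((n:ℤ) : ℂ) := by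
      rw [sub_eq_zero] at hc; exact_mod_cast hc
    have : ((a:ℤ) + m - j₀ : ℤ) = (n:ℤ) := by exact_mod_cast h'
    omega
  have hkey : (((a:ℤ) + m - j₀ : ℤ) : ℂ) + (n:ℂ) + 2*(lam + (j₀:ℂ) - 1) = 0 := by
    rcases mul_eq_zero.mp hcoeff.symm with h' | h'
    · rcases mul_eq_zero.mp h' with h'' | h''
      · exact absurd h'' hln
      · exact h''
    · exact absurd h' hgc
  obtain ⟨e, he⟩ := hn2
  refine ⟨(N:ℤ) - a + (e + m + (n:ℤ)), ?_, by omega, ?_⟩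
  · rw [max_le_iff]
    omega
  · have h2q : ((2:ℤ))*((N:ℤ) - a + (e + m + (n:ℤ))) = 2*N - a + m + j₀ + (n:ℤ) := by
      omega
    have h2qc := congrArg (Int.cast : ℤ → ℂ) h2q
    have hec := congrArg (Int.cast : ℤ → ℂ) he
    push_cast at h2qc hkey hec ⊢
    linear_combination (1/2 : ℂ) * hkey - (1/2 : ℂ) * hec
end
end

section
/- Let N ∈ ℕ, m ∈ ℤ with m > N, a ∈ ℕ with a ≥ m−N, q ∈ ℤ with max(0, N-a+m) ≤ q ≤ 2N, and set λ := N+1-a-q. Define the tuple (f_{-N},…,f_N) of polynomials by: for 0 ≤ j ≤ N, f_{-j}(t) := i^j ((N+j)!/N!) (Γ(λ+⌊(a-m+j-1)/2⌋)/Γ(λ+⌊(a-m-1)/2⌋)) Σ_{r=0}^{N-j} C_{j,r}^- C̃_{a-m-2N+j+2r}^{λ+N-1-r}(it), and for 1 ≤ j ≤ N, f_j(t) := (-i)^j ((N+j)!/N!) (Γ(λ+⌊(a-m+j-1)/2⌋+q-N)/Γ(λ+⌊(a-m-1)/2⌋)) Σ_{r=0}^{N-j} D_{j,r} C̃_{a-m+j+2(q-2N+r)}^{λ+N-1-r}(it).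 Then f_j ∈ Pol_{a-m+j}[t]_even for every -N ≤ j ≤ N, and the tuple (f_{-N},…,f_N) is nonzero. -/
noncomputable section

open Polynomial Finset

/-! ### Auxiliary lemmas -/

private lemma gegenCit_eq (μ : ℂ) (nn : ℕ) :
    gegenCit μ (nn : ℤ) =
      ∑ k ∈ range (nn / 2 + 1),
        C ((-1 : ℂ) ^ k / ((k.factorial : ℂ) * ((nn - 2 * k).factorial : ℂ)) *
            (∏ s ∈ range (nn / 2 - k), (μ + (((nn + 1) / 2 : ℕ) : ℂ) + (s : ℂ))) *
            (2 * Complex.I) ^ (nn - 2 * k)) * X ^ (nn - 2 * k) := by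
  rw [gegenCit, gegenCZ, if_pos (Int.natCast_nonneg nn), Int.toNat_natCast, gegenC,
    Polynomial.comp, Polynomial.eval₂_finset_sum]
  refine Finset.sum_congr rfl fun k hk => ?_
  rw [← Polynomial.comp, Polynomial.mul_comp, Polynomial.C_comp, Polynomial.pow_comp,
    Polynomial.mul_comp, Polynomial.C_comp, Polynomial.X_comp,
    show Polynomial.C (2:ℂ) * (Polynomial.C Complex.I * X) = C (2*Complex.I) * X by
      rw [← mul_assoc, ← C_mul],
    mul_pow, ← C_pow, ← mul_assoc, ← C_mul]

private lemma gegenCit_coeff (μ : ℂ) (nn n : ℕ) :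
    (gegenCit μ (nn : ℤ)).coeff n =
      ∑ k ∈ range (nn / 2 + 1),
        (if n = nn - 2 * k then
          ((-1 : ℂ) ^ k / ((k.factorial : ℂ) * ((nn - 2 * k).factorial : ℂ)) *
            (∏ s ∈ range (nn / 2 - k), (μ + (((nn + 1) / 2 : ℕ) : ℂ) + (s : ℂ))) *
            (2 * Complex.I) ^ (nn - 2 * k))
        else 0) := by
  rw [gegenCit_eq, Polynomial.finset_sum_coeff]
  refine Finset.sum_congr rfl fun k _ => ?_
  rw [Polynomial.coeff_C_mul, Polynomial.coeff_X_pow]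
  split <;> simp

private lemma gegenCit_coeff_eq_zero {μ : ℂ} {l : ℤ} {n : ℕ}
    (h : l < n ∨ ¬ (2 ∣ (l - n))) : (gegenCit μ l).coeff n = 0 := by
  rcases lt_or_ge l 0 with hl | hl
  · rw [gegenCit, gegenCZ, if_neg (by omega)]; simp
  · obtain ⟨nn, rfl⟩ := Int.eq_ofNat_of_zero_le hl
    rw [gegenCit_coeff]
    refine Finset.sum_eq_zero fun k hk => ?_
    rw [if_neg]
    intro hn
    simp only [Finset.mem_range] at hk
    rcases h with h | h
    · omega
    · apply h; omega

private lemma gegenCit_coeff_top (μ : ℂ) (nn : ℕ) :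
    (gegenCit μ (nn : ℤ)).coeff nn =
      (1 / (nn.factorial : ℂ)) *
        (∏ s ∈ range (nn / 2), (μ + (((nn + 1) / 2 : ℕ) : ℂ) + (s : ℂ))) *
        (2 * Complex.I) ^ nn := by
  rw [gegenCit_coeff, Finset.sum_eq_single 0]
  · simp
  · intro k hk hk0
    rw [if_neg]
    simp only [Finset.mem_range] at hk
    omega
  · intro h; simp at h

private lemma polEven_zero (b : ℤ) : polEven b 0 := by
  intro n hn; simp at hn

private lemma polEven_C_mul {b : ℤ} {c : ℂ} {f : ℂ[X]} (h : polEven b f) :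
    polEven b (C c * f) := by
  intro n hn
  rw [Polynomial.coeff_C_mul] at hn
  exact h n (fun h0 => hn (by rw [h0, mul_zero]))

private lemma polEven_sum {b : ℤ} {s : Finset ℕ} {f : ℕ → ℂ[X]}
    (h : ∀ i ∈ s, polEven b (f i)) : polEven b (∑ i ∈ s, f i) := by
  intro n hn
  rw [Polynomial.finset_sum_coeff] at hn
  obtain ⟨i, hi, hne⟩ := Finset.exists_ne_zero_of_sum_ne_zero hn
  exact h i hi n hne

private lemma polEven_gegenCit {b l : ℤ} (μ : ℂ) (h1 : l ≤ b) (h2 : (2:ℤ) ∣ (b - l)) :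
    polEven b (gegenCit μ l) := by
  intro n hn
  constructor
  · by_contra hc
    exact hn (gegenCit_coeff_eq_zero (Or.inl (by omega)))
  · by_contra hc
    refine hn (gegenCit_coeff_eq_zero (Or.inr fun hd => hc ?_))
    omega

private lemma part1 (N a : ℕ) (m : ℤ) (hm : (N : ℤ) < m) (ha : m - (N : ℤ) ≤ (a : ℤ))
    (q : ℤ) (hq1 : max 0 ((N : ℤ) - a + m) ≤ q) (hq2 : q ≤ 2 * N) :
    ∀ j : ℤ, |j| ≤ (N : ℤ) → polEven ((a : ℤ) - m + j) (F16 N a m q j) := by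
  have hq0 : 0 ≤ q := le_trans (le_max_left _ _) hq1
  intro j hj
  rw [F16]
  by_cases h1 : 1 ≤ j ∧ j ≤ (N : ℤ)
  · rw [if_pos h1]
    apply polEven_C_mul
    apply polEven_sum
    intro r hr
    simp only [Finset.mem_range] at hr
    have hjN : (j.toNat : ℤ) = j := Int.toNat_of_nonneg (by omega)
    have hjN' : j.toNat ≤ N := by omega
    by_cases hr2 : (r : ℤ) ≤ 2 * N - q
    · apply polEven_C_mul
      apply polEven_gegenCit
      · omega
      · omega
    · have : Dc N m q j.toNat r = 0 := by
        rw [Dc]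
        have hmem : (2 * N - q).toNat ∈ range r := by
          rw [Finset.mem_range]; omega
        apply mul_eq_zero_of_right
        refine Finset.prod_eq_zero hmem ?_
        have h0 : (((2 * (N:ℤ) - q).toNat : ℕ) : ℂ) = 2 * (N:ℂ) - (q:ℂ) := by
          rw [← Int.cast_natCast, Int.toNat_of_nonneg (by omega)]
          push_cast
          ring
        rw [h0]
        ring
      rw [this, map_zero, zero_mul]
      exact polEven_zero _
  · rw [if_neg h1]
    by_cases h2 : -(N : ℤ) ≤ j ∧ j ≤ 0
    · rw [if_pos h2]
      apply polEven_C_mul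
      apply polEven_sum
      intro r hr
      simp only [Finset.mem_range] at hr
      have hsN : ((-j).toNat : ℤ) = -j := Int.toNat_of_nonneg (by omega)
      have hsN' : (-j).toNat ≤ N := by omega
      apply polEven_C_mul
      apply polEven_gegenCit
      · omega
      · omega
    · rw [if_neg h2]
      exact polEven_zero _

private lemma witness1 (N a : ℕ) (m : ℤ) (hm : (N : ℤ) < m) (ha : m - (N : ℤ) ≤ (a : ℤ))
    (q : ℤ) (hq1 : max 0 ((N : ℤ) - a + m) ≤ q) (hq2 : q ≤ 2 * N)
    (hT : (0:ℤ) ≤ (a : ℤ) - m) :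
    F16 N a m q (-(((N - min N q.toNat : ℕ) : ℤ))) ≠ 0 := by
  have hq0 : 0 ≤ q := le_trans (le_max_left _ _) hq1
  have hq1' : (N : ℤ) - a + m ≤ q := le_trans (le_max_right _ _) hq1
  set sN : ℕ := N - min N q.toNat with hsdef
  have hsN : sN ≤ N := by omega
  have hs_le : (sN : ℤ) ≤ (a : ℤ) - m := by omega
  set nN : ℕ := ((a : ℤ) - m - sN).toNat with hndef
  have hnN : (nN : ℤ) = (a : ℤ) - m - sN := by omega
  intro hzero
  have hco := congrArg (fun p : ℂ[X] => p.coeff nN) hzero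
  simp only [Polynomial.coeff_zero] at hco
  simp only [F16] at hco
  rw [if_neg (by omega), if_pos (by constructor <;> omega)] at hco
  simp only [neg_neg, Int.toNat_natCast] at hco
  rw [Polynomial.coeff_C_mul, Polynomial.finset_sum_coeff] at hco
  rw [Finset.sum_eq_single_of_mem (N - sN) (Finset.self_mem_range_succ _)
    (fun r hr hne => by
      rw [Polynomial.coeff_C_mul, gegenCit_coeff_eq_zero (Or.inl (by
        simp only [Finset.mem_range] at hr
        omega)), mul_zero])] at hco
  rw [Polynomial.coeff_C_mul,
    show ((a:ℤ) - m - 2 * (N:ℤ) + (sN:ℤ) + 2 * ((N - sN : ℕ) : ℤ)) = ((nN : ℕ) : ℤ) by omega,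
    gegenCit_coeff_top] at hco
  -- now derive the contradiction
  refine absurd hco (mul_ne_zero (mul_ne_zero (mul_ne_zero ?_ ?_) ?_)
    (mul_ne_zero ?_ (mul_ne_zero (mul_ne_zero ?_ ?_) ?_)))
  · exact pow_ne_zero _ Complex.I_ne_zero
  · exact div_ne_zero (Nat.cast_ne_zero.2 (Nat.factorial_ne_zero _))
      (Nat.cast_ne_zero.2 (Nat.factorial_ne_zero _))
  · -- gratio
    rw [gratio, if_pos (by omega : (0:ℤ) ≤ ((a:ℤ) - m + (sN:ℤ) - 1) / 2 - ((a:ℤ) - m - 1) / 2)]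
    refine Finset.prod_ne_zero_iff.2 fun i hi => ?_
    simp only [Finset.mem_range] at hi
    rw [show ((N:ℂ) + 1 - (a:ℂ) - (q:ℂ) + ((((a:ℤ) - m - 1) / 2 : ℤ) : ℂ) + (i : ℂ)) =
        (((N:ℤ) + 1 - a - q + ((a:ℤ) - m - 1) / 2 + (i:ℤ) : ℤ) : ℂ) by push_cast; ring,
      Int.cast_ne_zero]
    omega
  · -- Cm ≠ 0
    rw [Cm]
    refine mul_ne_zero (mul_ne_zero (mul_ne_zero ?_ ?_) ?_) ?_
    · rw [Nat.choose_self]; norm_num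
    · exact div_ne_zero (Nat.cast_ne_zero.2 (Nat.factorial_ne_zero _))
        (Nat.cast_ne_zero.2 (Nat.factorial_ne_zero _))
    · refine Finset.prod_ne_zero_iff.2 fun i hi => ?_
      simp only [Finset.mem_range] at hi
      rw [show ((N:ℂ) + (m:ℂ) - (i:ℂ)) = (((N:ℤ) + m - i : ℤ) : ℂ) by push_cast; ring,
        Int.cast_ne_zero]
      omega
    · refine Finset.prod_ne_zero_iff.2 fun i hi => ?_
      simp only [Finset.mem_range] at hi
      rw [show ((N:ℂ) + 1 - (a:ℂ) - (q:ℂ) + (a:ℂ) - (N:ℂ) - 1 + (i:ℂ)) =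
          (((i:ℤ) - q : ℤ) : ℂ) by push_cast; ring,
        Int.cast_ne_zero]
      omega
  · norm_num [Nat.factorial_ne_zero]
  · -- gegenbauer leading product
    refine Finset.prod_ne_zero_iff.2 fun s' hs' => ?_
    simp only [Finset.mem_range] at hs'
    have hcast : ((((N:ℤ) + 1 - a - q + N - 1 - ((N - sN : ℕ) : ℤ) + (((nN + 1) / 2 : ℕ) : ℤ) +
          (s' : ℤ) : ℤ)) : ℂ) =
        ((N:ℂ) + 1 - (a:ℂ) - (q:ℂ) + (N:ℂ) - 1 - ((N - sN : ℕ) : ℂ) +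
          (((nN + 1) / 2 : ℕ) : ℂ) + (s' : ℂ)) := by
      simp only [Int.cast_add, Int.cast_sub, Int.cast_natCast, Int.cast_one]
      try ring
    rw [← hcast, Int.cast_ne_zero]
    omega
  · exact pow_ne_zero _ (by simp [Complex.I_ne_zero])

private lemma witness2 (N a : ℕ) (m : ℤ) (hm : (N : ℤ) < m) (ha : m - (N : ℤ) ≤ (a : ℤ))
    (q : ℤ) (hq1 : max 0 ((N : ℤ) - a + m) ≤ q) (hq2 : q ≤ 2 * N)
    (hT : (a : ℤ) - m < 0) :
    F16 N a m q (m - (a : ℤ)) ≠ 0 := by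
  have hq0 : 0 ≤ q := le_trans (le_max_left _ _) hq1
  have hq1' : (N : ℤ) - a + m ≤ q := le_trans (le_max_right _ _) hq1
  set jN : ℕ := (m - (a:ℤ)).toNat with hjdef
  have hjN : (jN : ℤ) = m - a := by omega
  have hjN' : jN ≤ N := by omega
  set pN : ℕ := (2 * (N:ℤ) - q).toNat with hpdef
  have hpN : (pN : ℤ) = 2 * (N:ℤ) - q := by omega
  have hpN' : pN ≤ N - jN := by omega
  intro hzero
  have hco := congrArg (fun p : ℂ[X] => p.coeff 0) hzero
  simp only [Polynomial.coeff_zero] at hco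
  simp only [F16] at hco
  rw [if_pos (by constructor <;> omega)] at hco
  rw [Polynomial.coeff_C_mul, Polynomial.finset_sum_coeff] at hco
  rw [Finset.sum_eq_single_of_mem pN (Finset.mem_range.2 (by omega))
    (fun r hr hne => by
      simp only [Finset.mem_range] at hr
      rcases lt_or_gt_of_ne hne with hlt | hgt
      · -- r < pN : negative degree
        rw [Polynomial.coeff_C_mul, gegenCit_coeff_eq_zero (Or.inl (by push_cast; omega)),
          mul_zero]
      · -- r > pN : Dc vanishes
        have hD : Dc N m q (m - (a:ℤ)).toNat r = 0 := by
          rw [Dc]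
          apply mul_eq_zero_of_right
          refine Finset.prod_eq_zero (show pN ∈ Finset.range r from Finset.mem_range.2 (by omega)) ?_
          have hc0 : ((pN : ℕ) : ℂ) = 2 * (N:ℂ) - (q:ℂ) := by
            rw [← Int.cast_natCast, hpN]
            push_cast
            ring
          rw [hc0]
          ring
        rw [hD, map_zero, zero_mul, Polynomial.coeff_zero])] at hco
  rw [Polynomial.coeff_C_mul,
    show ((a:ℤ) - m + (m - (a:ℤ)) + 2 * (q - 2 * (N:ℤ) + (pN : ℤ))) = ((0 : ℕ) : ℤ) by omega,
    gegenCit_coeff_top] at hco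
  -- hco : K * (Dc * T) = 0; kill all factors
  refine absurd hco (mul_ne_zero (mul_ne_zero (mul_ne_zero ?_ ?_) ?_)
    (mul_ne_zero ?_ (by simp)))
  · exact pow_ne_zero _ (neg_ne_zero.2 Complex.I_ne_zero)
  · exact div_ne_zero (Nat.cast_ne_zero.2 (Nat.factorial_ne_zero _))
      (Nat.cast_ne_zero.2 (Nat.factorial_ne_zero _))
  · -- gratio
    rw [gratio, if_pos (by omega :
      (0:ℤ) ≤ ((a:ℤ) - m + (m - (a:ℤ)) - 1) / 2 + q - (N:ℤ) - ((a:ℤ) - m - 1) / 2)]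
    refine Finset.prod_ne_zero_iff.2 fun i hi => ?_
    simp only [Finset.mem_range] at hi
    rw [show ((N:ℂ) + 1 - (a:ℂ) - (q:ℂ) + ((((a:ℤ) - m - 1) / 2 : ℤ) : ℂ) + (i : ℂ)) =
        (((N:ℤ) + 1 - a - q + ((a:ℤ) - m - 1) / 2 + (i:ℤ) : ℤ) : ℂ) by push_cast; ring,
      Int.cast_ne_zero]
    omega
  · -- Dc ≠ 0
    rw [Dc]
    refine mul_ne_zero (mul_ne_zero (mul_ne_zero ?_ ?_) ?_) ?_
    · exact Nat.cast_ne_zero.2 (Nat.choose_pos (by omega)).ne'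
    · exact div_ne_zero (Nat.cast_ne_zero.2 (Nat.factorial_ne_zero _))
        (Nat.cast_ne_zero.2 (Nat.factorial_ne_zero _))
    · refine Finset.prod_ne_zero_iff.2 fun i hi => ?_
      simp only [Finset.mem_range] at hi
      rw [show ((N:ℂ) + (m:ℂ) - (i:ℂ)) = (((N:ℤ) + m - i : ℤ) : ℂ) by push_cast; ring,
        Int.cast_ne_zero]
      omega
    · refine Finset.prod_ne_zero_iff.2 fun i hi => ?_
      simp only [Finset.mem_range] at hi
      rw [show ((q:ℂ) - 2 * (N:ℂ) + (i:ℂ)) = ((q - 2 * (N:ℤ) + i : ℤ) : ℂ) by push_cast; ring,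
        Int.cast_ne_zero]
      omega

/-- the explicit tuple `F16` lies in the correct even polynomial spaces and
is nonzero. -/
theorem stmt16 (N a : ℕ) (m : ℤ) (hm : (N : ℤ) < m) (ha : m - (N : ℤ) ≤ (a : ℤ))
    (q : ℤ) (hq1 : max 0 ((N : ℤ) - a + m) ≤ q) (hq2 : q ≤ 2 * N) :
    (∀ j : ℤ, |j| ≤ (N : ℤ) → polEven ((a : ℤ) - m + j) (F16 N a m q j)) ∧
    F16 N a m q ≠ 0 := by
  refine ⟨part1 N a m hm ha q hq1 hq2, fun hF => ?_⟩
  by_cases hT : (0:ℤ) ≤ (a : ℤ) - m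
  · exact witness1 N a m hm ha q hq1 hq2 hT (congrFun hF _)
  · exact witness2 N a m hm ha q hq1 hq2 (by omega) (congrFun hF _)
end
end

section
/- For every μ ∈ ℂ and all integers ℓ ≥ 0 and d ≥ 0, the following identity of polynomials in t holds: (∏_{i=1}^{d} (μ+⌊(ℓ+1)/2⌋-i)) · C̃_ℓ^μ(it) = Σ_{s=0}^{d} binom(d,s) (∏_{i=0}^{s-1} (μ+ℓ-d+i)) C̃_{ℓ+2(s-d)}^{μ-s}(it), where C̃_{ℓ'}^{μ'} := 0 whenever ℓ' < 0. -/
noncomputable section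

open Polynomial Finset

/-! The identity is obtained by iterating the three-term relation
`(μ + ⌊(L+1)/2⌋ - 1) C̃_L^μ = C̃_{L-2}^μ + (μ + L - 1) C̃_L^{μ-1}`, valid for every integer `L`.
Applied to the `s`-th summand for `d`, its prefactor is `μ + ⌊(ℓ+1)/2⌋ - (d+1)` independently of
`s`, so multiplying the identity for `d` by this factor yields the one for `d + 1`, the
coefficients recombining by a Pascal-type rule. The three-term relation is checked monomial
by monomial: the `k`-th coefficient of `(μ + ⌈n/2⌉ - 1) C̃_n^μ - (μ + n - 1) C̃_n^{μ-1}` is `-k`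
times that of `C̃_n^{μ-1}`, which is minus the `(k-1)`-th coefficient of `C̃_{n-2}^μ`. -/

lemma mul_prod_range_add_one {R : Type*} [CommRing R] (x : R) (r : ℕ) :
    x * ∏ s ∈ range r, (x + 1 + (s : R)) = (∏ s ∈ range r, (x + (s : R))) * (x + r) := by
  rw [← prod_range_succ, prod_range_succ', mul_comm]
  push_cast
  simp only [add_zero, add_assoc, add_comm (1 : R)]

lemma choose_succ_mul_prod_range {R : Type*} [CommRing R] (x : R) {d k : ℕ} (hk : k ≤ d) :
    ((d + 1).choose (k + 1) : R) * ∏ i ∈ range (k + 1), (x - 1 + (i : R))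
      = (d.choose (k + 1) : R) * ∏ i ∈ range (k + 1), (x + (i : R))
        + (d.choose k : R) * (∏ i ∈ range k, (x + (i : R))) * (x + k - d - 1) := by
  have hshift : ∏ i ∈ range (k + 1), (x - 1 + (i : R)) = (x - 1) * ∏ i ∈ range k, (x + (i : R)) := by
    rw [prod_range_succ', mul_comm]
    push_cast
    simp only [sub_add_add_cancel, add_zero]
  have hchoose : ((d.choose (k + 1) * (k + 1) : ℕ) : R) = (d.choose k * (d - k) : ℕ) :=
    congrArg _ (Nat.choose_succ_right_eq d k)
  push_cast [Nat.cast_sub hk] at hchoose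
  rw [hshift, prod_range_succ, Nat.choose_succ_succ', Nat.cast_add]
  linear_combination (-(∏ i ∈ range k, (x + (i : R)))) * hchoose

lemma sum_range_add_sum_range_shift {R : Type*} [Semiring R] (a b c f : ℕ → R) (d : ℕ)
    (h0 : c 0 = a 0) (hsucc : ∀ k ≤ d, c (k + 1) = a (k + 1) + b k) (hlast : a (d + 1) = 0) :
    ∑ s ∈ range (d + 1), a s * f s + ∑ s ∈ range (d + 1), b s * f (s + 1)
      = ∑ s ∈ range (d + 2), c s * f s := by
  have hc : ∀ k ∈ range (d + 1), c (k + 1) * f (k + 1) = a (k + 1) * f (k + 1) + b k * f (k + 1) :=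
    fun k hk => by rw [hsucc k (Nat.lt_succ_iff.mp (mem_range.mp hk)), add_mul]
  rw [sum_range_succ' _ (d + 1), sum_congr rfl hc, sum_add_distrib, h0,
    add_right_comm, ← sum_range_succ' (fun s => a s * f s), sum_range_succ _ (d + 1), hlast,
    zero_mul, add_zero]

def gegenTerm (μ : ℂ) (n k : ℕ) : ℂ[X] :=
  C ((-1 : ℂ) ^ k / ((k.factorial : ℂ) * ((n - 2 * k).factorial : ℂ)) *
      ∏ s ∈ range (n / 2 - k), (μ + (((n + 1) / 2 : ℕ) : ℂ) + (s : ℂ))) *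
    (C 2 * X) ^ (n - 2 * k)

lemma gegenC_eq_sum_gegenTerm (μ : ℂ) (n : ℕ) :
    gegenC μ n = ∑ k ∈ range (n / 2 + 1), gegenTerm μ n k := rfl

lemma C_mul_gegenTerm_sub (μ : ℂ) {n k : ℕ} (hk : k ≤ n / 2 + 1) :
    C (μ + (((n + 2 + 1) / 2 : ℕ) : ℂ) - 1) * gegenTerm μ (n + 2) k
        - C (μ + ((n + 2 : ℕ) : ℂ) - 1) * gegenTerm (μ - 1) (n + 2) k
      = -(C (k : ℂ) * gegenTerm (μ - 1) (n + 2) k) := by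
  set x : ℂ := μ - 1 + (((n + 2 + 1) / 2 : ℕ) : ℂ)
  set r : ℕ := (n + 2) / 2 - k
  have hx : x + r + k = μ + ((n + 2 : ℕ) : ℂ) - 1 := by
    have : (((n + 2 + 1) / 2 + r + k : ℕ) : ℂ) = ((n + 2 : ℕ) : ℂ) := by congr 1; omega
    push_cast at this ⊢
    linear_combination this
  have hprod : ∏ s ∈ range r, (μ + (((n + 2 + 1) / 2 : ℕ) : ℂ) + (s : ℂ))
      = ∏ s ∈ range r, (x + 1 + (s : ℂ)) := prod_congr rfl fun s _ => by ring
  simp only [gegenTerm, ← mul_assoc, ← C_mul, ← sub_mul, ← C_sub, ← neg_mul, ← C_neg]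
  congr 2
  rw [hprod, ← hx]
  change _ - _ * ∏ s ∈ range r, (x + (s : ℂ)) = _ * ∏ s ∈ range r, (x + (s : ℂ))
  linear_combination (-1 : ℂ) ^ k / ((k.factorial : ℂ) * ((n + 2 - 2 * k).factorial : ℂ)) *
    mul_prod_range_add_one x r

lemma C_mul_gegenTerm_succ (μ : ℂ) (n j : ℕ) :
    C ((j + 1 : ℕ) : ℂ) * gegenTerm (μ - 1) (n + 2) (j + 1) = -gegenTerm μ n j := by
  have hdeg : n + 2 - 2 * (j + 1) = n - 2 * j := by omega
  have hlen : (n + 2) / 2 - (j + 1) = n / 2 - j := by omega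
  have hprod : ∏ s ∈ range (n / 2 - j), (μ - 1 + (((n + 2 + 1) / 2 : ℕ) : ℂ) + (s : ℂ))
      = ∏ s ∈ range (n / 2 - j), (μ + (((n + 1) / 2 : ℕ) : ℂ) + (s : ℂ)) := by
    have : (n + 2 + 1) / 2 = (n + 1) / 2 + 1 := by omega
    refine prod_congr rfl fun s _ => ?_
    rw [this]
    push_cast
    ring
  simp only [gegenTerm, ← mul_assoc, ← C_mul, ← neg_mul, ← C_neg, hdeg, hlen, hprod]
  congr 2
  rw [Nat.factorial_succ]
  push_cast
  field_simp
  ring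

lemma gegenC_add_two_three_term (μ : ℂ) (n : ℕ) :
    C (μ + (((n + 2 + 1) / 2 : ℕ) : ℂ) - 1) * gegenC μ (n + 2)
      = gegenC μ n + C (μ + ((n + 2 : ℕ) : ℂ) - 1) * gegenC (μ - 1) (n + 2) := by
  have hlen : (n + 2) / 2 = n / 2 + 1 := by omega
  have hterm : ∀ k ∈ range ((n + 2) / 2 + 1),
      C (μ + (((n + 2 + 1) / 2 : ℕ) : ℂ) - 1) * gegenTerm μ (n + 2) k
        - C (μ + ((n + 2 : ℕ) : ℂ) - 1) * gegenTerm (μ - 1) (n + 2) k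
      = -(C (k : ℂ) * gegenTerm (μ - 1) (n + 2) k) :=
    fun k hk => C_mul_gegenTerm_sub μ (by have := mem_range.mp hk; omega)
  rw [← sub_eq_iff_eq_add, gegenC_eq_sum_gegenTerm, gegenC_eq_sum_gegenTerm,
    gegenC_eq_sum_gegenTerm, mul_sum, mul_sum, ← sum_sub_distrib, sum_congr rfl hterm, hlen,
    sum_range_succ']
  simp only [C_mul_gegenTerm_succ, neg_neg, Nat.cast_zero, map_zero, zero_mul, neg_zero, add_zero]

lemma gegenCZ_three_term (μ : ℂ) (L : ℤ) :
    C (μ + (((L + 1) / 2 : ℤ) : ℂ) - 1) * gegenCZ μ L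
      = gegenCZ μ (L - 2) + C (μ + (L : ℂ) - 1) * gegenCZ (μ - 1) L := by
  rcases lt_or_ge L 0 with hL | hL
  · simp only [gegenCZ, if_neg hL.not_ge, if_neg (show ¬ 0 ≤ L - 2 by omega), mul_zero, add_zero]
  obtain ⟨n, rfl⟩ := Int.eq_ofNat_of_zero_le hL
  match n with
  | 0 => norm_num [gegenC, gegenCZ]
  | 1 => norm_num [gegenC, gegenCZ]
  | n + 2 =>
    have hdiv : (((n + 2 : ℕ) : ℤ) + 1) / 2 = (((n + 2 + 1) / 2 : ℕ) : ℤ) := by omega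
    have hsub : ((n + 2 : ℕ) : ℤ) - 2 = n := by omega
    simp only [gegenCZ, hdiv, hsub, Int.natCast_nonneg, if_true, Int.toNat_natCast,
      Int.cast_natCast]
    exact gegenC_add_two_three_term μ n

lemma gegenCit_three_term (μ : ℂ) (L : ℤ) :
    C (μ + (((L + 1) / 2 : ℤ) : ℂ) - 1) * gegenCit μ L
      = gegenCit μ (L - 2) + C (μ + (L : ℂ) - 1) * gegenCit (μ - 1) L := by
  have h := congrArg (fun p : ℂ[X] => p.comp (C Complex.I * X)) (gegenCZ_three_term μ L)
  simp only [mul_comp, add_comp, C_comp] at h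
  exact h

theorem C_prod_mul_gegenCit_eq_sum (μ : ℂ) (ℓ : ℤ) (d : ℕ) :
    C (∏ i ∈ range d, (μ + (((ℓ + 1) / 2 : ℤ) : ℂ) - ((i : ℂ) + 1))) * gegenCit μ ℓ
      = ∑ s ∈ range (d + 1),
          C ((d.choose s : ℂ) * ∏ i ∈ range s, (μ + (ℓ : ℂ) - (d : ℂ) + (i : ℂ))) *
            gegenCit (μ - (s : ℂ)) (ℓ + 2 * ((s : ℤ) - (d : ℤ))) := by
  induction d with
  | zero => simp
  | succ d ih =>
    have hstep : ∀ s : ℕ,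
        C (μ + (((ℓ + 1) / 2 : ℤ) : ℂ) - ((d : ℂ) + 1)) * gegenCit (μ - s) (ℓ + 2 * (s - d))
          = gegenCit (μ - s) (ℓ + 2 * (s - (d + 1 : ℕ)))
            + C (μ + ℓ - d + s - d - 1) *
              gegenCit (μ - (s + 1 : ℕ)) (ℓ + 2 * ((s + 1 : ℕ) - (d + 1 : ℕ))) := by
      intro s
      have h := gegenCit_three_term (μ - s) (ℓ + 2 * (s - d))
      rw [show (ℓ + 2 * (s - d) + 1) / 2 = (ℓ + 1) / 2 + s - d by omega] at h
      convert h using 3 <;> push_cast <;> ring_nf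
    rw [prod_range_succ, C_mul, mul_comm (C _), mul_assoc, ih, mul_sum]
    simp only [mul_left_comm (C (μ + (((ℓ + 1) / 2 : ℤ) : ℂ) - ((d : ℂ) + 1))), hstep, mul_add,
      ← mul_assoc, ← C_mul, sum_add_distrib]
    refine sum_range_add_sum_range_shift _ _ _
      (fun s => gegenCit (μ - s) (ℓ + 2 * (s - (d + 1 : ℕ)))) d (by simp) (fun k hk => ?_) (by simp)
    rw [← C_add]
    congr 1
    have hprod : ∏ i ∈ range (k + 1), (μ + ℓ - (d + 1 : ℕ) + (i : ℂ))
        = ∏ i ∈ range (k + 1), (μ + ℓ - d - 1 + (i : ℂ)) :=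
      prod_congr rfl fun i _ => by push_cast; ring
    rw [hprod, choose_succ_mul_prod_range _ hk, mul_assoc]

/-- the generalized three-term relation (Lemma A.11). -/
theorem stmt19 (μ : ℂ) (ℓ d : ℕ) :
    C (∏ i ∈ Finset.range d, (μ + (((ℓ + 1) / 2 : ℕ) : ℂ) - ((i : ℂ) + 1))) *
        gegenCit μ (ℓ : ℤ)
      = ∑ s ∈ Finset.range (d + 1),
          C ((d.choose s : ℂ) * ∏ i ∈ Finset.range s, (μ + (ℓ : ℂ) - (d : ℂ) + (i : ℂ))) *
            gegenCit (μ - (s : ℂ)) ((ℓ : ℤ) + 2 * ((s : ℤ) - (d : ℤ))) := by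
  have hdiv : (((ℓ + 1) / 2 : ℕ) : ℂ) = ((((ℓ : ℤ) + 1) / 2 : ℤ) : ℂ) := by norm_cast
  rw [hdiv]
  exact_mod_cast C_prod_mul_gegenCit_eq_sum μ ℓ d
end
end
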